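/- arXiv:2104.01880 — 4 statements merged into one kernel-verified Lean document; each statement's English description precedes it below -/
import Mathlib

section
/- For every real number u > 0 and every x in the closed interval [0,1], the Fourier expansion u·cosh((x−1/2)u)/(2·sinh(u/2)) = 1 + 2·Σ_{m=1}^{∞} u²·cos(2πmx)/(u² + 4π²m²) holds. -/
/-!
On `[0, 1]` the function `cosh ((x - 1/2) u)` takes equal values at the endpoints, so it defines a
continuous function on the circle `ℝ/ℤ`. Writing `cosh` as a sum of two exponentials, its `n`-th
Fourier coefficient is `2 u sinh (u/2) / (u² + 4π²n²)`, which is summable over `ℤ`; hence the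
Fourier series converges to the function at every point of `[0, 1]`, and pairing the terms `±n`
of this even real series gives the cosine series.
-/

open Real Set

namespace AddCircle

variable {𝕜 B : Type*} [AddCommGroup 𝕜] [LinearOrder 𝕜] [IsOrderedAddMonoid 𝕜]
  [Archimedean 𝕜] {p a : 𝕜} [Fact (0 < p)]

theorem liftIoc_coe_apply_of_mem_Icc {f : 𝕜 → B} (hf : f a = f (a + p))
    {x : 𝕜} (hx : x ∈ Icc a (a + p)) : liftIoc p a f x = f x := by
  rcases eq_or_lt_of_le hx.1 with rfl | hax
  · rw [← coe_add_period, liftIoc_coe_apply (by simp [(Fact.out : 0 < p)]), hf]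
  · exact liftIoc_coe_apply ⟨hax, hx.2⟩

end AddCircle

theorem fourierCoeffOn_add {a b : ℝ} (hab : a < b) {f g : ℝ → ℂ}
    (hf : IntervalIntegrable f MeasureTheory.volume a b)
    (hg : IntervalIntegrable g MeasureTheory.volume a b) (n : ℤ) :
    fourierCoeffOn hab (fun x => f x + g x) n
      = fourierCoeffOn hab f n + fourierCoeffOn hab g n := by
  have hfourier : Continuous fun x : ℝ => fourier (-n) (x : AddCircle (b - a)) :=
    (map_continuous _).comp (AddCircle.continuous_mk' _)
  simp only [fourierCoeffOn_eq_integral, smul_eq_mul, mul_add]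
  rw [intervalIntegral.integral_add (hf.continuousOn_mul hfourier.continuousOn)
    (hg.continuousOn_mul hfourier.continuousOn), smul_add]

theorem hasSum_fourierCoeffOn_smul_fourier {a b : ℝ} (hab : a < b) {f : ℝ → ℂ}
    (hf : ContinuousOn f (Icc a b)) (hfab : f a = f b) (hs : Summable (fourierCoeffOn hab f))
    {x : ℝ} (hx : x ∈ Icc a b) :
    HasSum (fun n => fourierCoeffOn hab f n • fourier n (x : AddCircle (b - a))) (f x) := by
  have : Fact (0 < b - a) := ⟨sub_pos.2 hab⟩
  have hb : a + (b - a) = b := add_sub_cancel a b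
  let F : C(AddCircle (b - a), ℂ) :=
    ⟨AddCircle.liftIoc (b - a) a f, AddCircle.liftIoc_continuous (by rwa [hb]) (by rwa [hb])⟩
  have := has_pointwise_sum_fourier_series_of_summable (f := F) hs x
  rwa [ContinuousMap.coe_mk,
    AddCircle.liftIoc_coe_apply_of_mem_Icc (by rwa [hb]) (by rwa [hb])] at this

theorem hasSum_two_mul_cos_of_hasSum_fourier {T : ℝ} {c : ℤ → ℝ} (hc : ∀ n, c (-n) = c n)
    {x S : ℝ} (h : HasSum (fun n : ℤ => (c n : ℂ) • fourier n (x : AddCircle T)) S) :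
    HasSum (fun m : ℕ => 2 * c (m + 1) * Real.cos (2 * π * (m + 1) * x / T)) (S - c 0) := by
  have hpair : ∀ n : ℕ, (c n : ℂ) * fourier n (x : AddCircle T)
      + (c (-n : ℤ) : ℂ) * fourier (-n : ℤ) (x : AddCircle T)
      = (2 * c n * Real.cos (2 * π * n * x / T) : ℝ) := by
    intro n
    rw [hc, fourier_coe_apply, fourier_coe_apply]
    push_cast
    rw [Complex.cos]
    ring_nf
  have hnat := h.nat_add_neg
  simp only [smul_eq_mul, hpair, fourier_zero, mul_one, ← Complex.ofReal_add,
    Complex.hasSum_ofReal] at hnat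
  have hshift := (hasSum_nat_add_iff' 1).2 hnat
  push_cast [Finset.sum_range_one, mul_zero, zero_mul, zero_div, Real.cos_zero] at hshift
  rwa [show S + c 0 - 2 * c 0 * 1 = S - c 0 by ring] at hshift

theorem summable_div_add_mul_sq (a : ℝ) {b c : ℝ} (hb : 0 ≤ b) (hc : 0 < c) :
    Summable fun n : ℤ => a / (b + c * n ^ 2) := by
  refine Summable.of_norm_bounded_eventually
    ((Real.summable_one_div_int_pow.2 one_lt_two).mul_left (|a| / c)) ?_
  filter_upwards [Filter.eventually_cofinite_ne (0 : ℤ)] with n (hn : n ≠ 0)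
  have hn2 : 0 < c * (n : ℝ) ^ 2 := by positivity
  calc ‖a / (b + c * n ^ 2)‖ = |a| / (b + c * n ^ 2) := by
        rw [norm_div, Real.norm_eq_abs, Real.norm_of_nonneg (by positivity)]
    _ ≤ |a| / (c * n ^ 2) := div_le_div_of_nonneg_left (abs_nonneg a) hn2 (by linarith)
    _ = |a| / c * (1 / (n : ℝ) ^ 2) := by field_simp

open Complex in
theorem fourierCoeffOn_cexp_mul_sub_half (c : ℂ) (n : ℤ) (hc : c ≠ 2 * π * I * n) :
    fourierCoeffOn zero_lt_one (fun x : ℝ => cexp (c * (x - 1 / 2))) n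
      = 2 * Complex.sinh (c / 2) / (c - 2 * π * I * n) := by
  have hc' : c - 2 * π * I * n ≠ 0 := sub_ne_zero.2 hc
  have hintegrand : ∀ x : ℝ,
      fourier (-n) (x : AddCircle ((1 : ℝ) - 0)) • cexp (c * (x - 1 / 2))
        = cexp (-c / 2) * cexp ((c - 2 * π * I * n) * x) := by
    intro x
    rw [fourier_coe_apply, smul_eq_mul, ← Complex.exp_add, ← Complex.exp_add]
    congr 1
    push_cast
    ring
  have hperiod : cexp (c - 2 * π * I * n) = cexp c := by
    rw [show c - 2 * π * I * n = c + (-n : ℤ) * (2 * π * I) by push_cast; ring,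
      Complex.exp_add, Complex.exp_int_mul_two_pi_mul_I, mul_one]
  rw [fourierCoeffOn_eq_integral]
  simp_rw [hintegrand]
  rw [intervalIntegral.integral_const_mul, integral_exp_mul_complex hc']
  simp only [ofReal_one, ofReal_zero, mul_one, mul_zero, hperiod, Complex.exp_zero, sub_zero,
    div_one, one_smul, Complex.sinh]
  rw [show cexp c = cexp (c / 2) * cexp (c / 2) by rw [← Complex.exp_add, add_halves],
    show -c / 2 = -(c / 2) by ring, Complex.exp_neg]
  field_simp

open Complex in
theorem fourierCoeffOn_cosh_sub_half_mul {u : ℝ} (hu : u ≠ 0) (n : ℤ) :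
    fourierCoeffOn zero_lt_one (fun x : ℝ => (Real.cosh ((x - 1 / 2) * u) : ℂ)) n
      = (2 * u * Real.sinh (u / 2) / (u ^ 2 + 4 * π ^ 2 * n ^ 2) : ℝ) := by
  have hne : ∀ v : ℝ, v ≠ 0 → (v : ℂ) ≠ 2 * π * I * n := fun v hv h =>
    hv (by simpa using congrArg Complex.re h)
  have hcosh : (fun x : ℝ => (Real.cosh ((x - 1 / 2) * u) : ℂ)) = fun x : ℝ =>
      (1 / 2 : ℂ) * (cexp (u * (x - 1 / 2)) + cexp ((-u : ℝ) * (x - 1 / 2))) := by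
    ext x
    rw [ofReal_cosh, Complex.cosh]
    push_cast
    ring_nf
  have hint : ∀ v : ℝ, IntervalIntegrable (fun x : ℝ => cexp (v * (x - 1 / 2)))
      MeasureTheory.volume 0 1 := fun v => by
    apply Continuous.intervalIntegrable; fun_prop
  rw [hcosh, fourierCoeffOn.const_mul, fourierCoeffOn_add _ (hint u) (hint (-u)),
    fourierCoeffOn_cexp_mul_sub_half _ _ (hne u hu),
    fourierCoeffOn_cexp_mul_sub_half _ _ (hne (-u) (neg_ne_zero.2 hu))]
  have h1 : (u : ℂ) - 2 * π * I * n ≠ 0 := sub_ne_zero.2 (hne u hu)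
  have h2 : ((-u : ℝ) : ℂ) - 2 * π * I * n ≠ 0 := sub_ne_zero.2 (hne (-u) (neg_ne_zero.2 hu))
  have h3 : (u : ℂ) ^ 2 + 4 * π ^ 2 * n ^ 2 ≠ 0 := by
    exact_mod_cast (by positivity : (0 : ℝ) < u ^ 2 + 4 * π ^ 2 * n ^ 2).ne'
  push_cast at h2 ⊢
  rw [neg_div, Complex.sinh_neg]
  field_simp
  rw [eq_div_iff (by convert h3 using 1; ring)]
  linear_combination (-8 * u * Complex.sinh (u / 2) * π ^ 2 * n ^ 2) * I_sq

theorem fourierCoeffOn_mul_cosh_sub_half_mul_div_sinh {u : ℝ} (hu : u ≠ 0) (n : ℤ) :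
    fourierCoeffOn zero_lt_one
      (fun x : ℝ => ((u * Real.cosh ((x - 1 / 2) * u) / (2 * Real.sinh (u / 2)) : ℝ) : ℂ)) n
      = (u ^ 2 / (u ^ 2 + 4 * π ^ 2 * n ^ 2) : ℝ) := by
  have hsinh : Real.sinh (u / 2) ≠ 0 := by simpa using hu
  have hscale :
      (fun x : ℝ => ((u * Real.cosh ((x - 1 / 2) * u) / (2 * Real.sinh (u / 2)) : ℝ) : ℂ))
        = fun x : ℝ =>
          ((u / (2 * Real.sinh (u / 2)) : ℝ) : ℂ) * (Real.cosh ((x - 1 / 2) * u) : ℂ) := by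
    ext x
    push_cast
    ring
  rw [hscale, fourierCoeffOn.const_mul, fourierCoeffOn_cosh_sub_half_mul hu, ← Complex.ofReal_mul]
  congr 1
  field_simp

/-- For every real `u > 0` and every `x ∈ [0,1]`,
`u cosh((x-1/2)u) / (2 sinh(u/2)) = 1 + 2 ∑_{m ≥ 1} u² cos(2πmx) / (u² + 4π²m²)`. -/
theorem cosh_div_sinh_fourier (u : ℝ) (hu : 0 < u)
    (x : ℝ) (hx : x ∈ Set.Icc (0 : ℝ) 1) :
    u * Real.cosh ((x - 1/2) * u) / (2 * Real.sinh (u / 2))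
      = 1 + 2 * ∑' m : ℕ,
          u ^ 2 * Real.cos (2 * π * (m + 1) * x) / (u ^ 2 + 4 * π ^ 2 * (m + 1 : ℝ) ^ 2) := by
  set f : ℝ → ℂ := fun y => (u * Real.cosh ((y - 1 / 2) * u) / (2 * Real.sinh (u / 2)) : ℝ)
  set c : ℤ → ℝ := fun n => u ^ 2 / (u ^ 2 + 4 * π ^ 2 * n ^ 2)
  have hcoeff : fourierCoeffOn zero_lt_one f = fun n => (c n : ℂ) :=
    funext (fourierCoeffOn_mul_cosh_sub_half_mul_div_sinh hu.ne')
  have hends : f 0 = f 1 := by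
    simp only [f]
    rw [← Real.cosh_neg]
    ring_nf
  have hsummable : Summable (fourierCoeffOn zero_lt_one f) := by
    rw [hcoeff]
    exact Complex.summable_ofReal.2 (summable_div_add_mul_sq _ (sq_nonneg u) (by positivity))
  have hseries := hasSum_fourierCoeffOn_smul_fourier zero_lt_one (by fun_prop) hends hsummable hx
  rw [hcoeff] at hseries
  have hcos := hasSum_two_mul_cos_of_hasSum_fourier (fun n => by simp [c]) hseries
  have hc0 : c 0 = 1 := by simp [c, hu.ne']
  rw [hc0] at hcos
  rw [← sub_eq_iff_eq_add', ← tsum_mul_left, ← hcos.tsum_eq]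
  congr 1 with m
  simp only [c, sub_zero, div_one]
  push_cast
  ring
end

section
/- For every real number u with |u| < 2π (u ≠ 0) and every real number x, one has u·cosh((x−1/2)u)/(2·sinh(u/2)) = Σ_{k=0}^{∞} (B_{2k}(x)/(2k)!)·u^{2k}. -/
/-!
Euler's formula for `ζ(2k)` bounds `|Bₙ|/n!` by `4/(2π)ⁿ`, so `∑ Bₙ uⁿ/n!` converges absolutely
for `|u| < 2π`. Its Cauchy product with `e^{xu}` is `∑ Bₙ(x) uⁿ/n!`, and comparing `x = 1` with
`x = 0` (where `Bₙ(1) = Bₙ + [n = 1]`) shows that the sum is `u/(eᵘ - 1)`. Hence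
`∑ Bₙ(x) uⁿ/n! = u e^{(x-1/2)u}/(2 sinh(u/2))`, and averaging this at `u` and `-u` keeps the even
terms and turns the exponential into a `cosh`.
-/

open Real

/-- Evaluation at a real `x` of the `n`-th Bernoulli polynomial, defined by the generating
function `∑_{n ≥ 0} (Bₙ(x)/n!) tⁿ = t e^{tx}/(eᵗ - 1)` for `|t| < 2π`. -/
noncomputable def bernoulliPoly (n : ℕ) (x : ℝ) : ℝ :=
  ((Polynomial.bernoulli n).map (algebraMap ℚ ℝ)).eval x

open Finset Nat

lemma bernoulliPoly_eq_bernoulliFun : bernoulliPoly = bernoulliFun := rfl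

lemma tsum_one_div_nat_pow_le_two {k : ℕ} (hk : 2 ≤ k) : ∑' n : ℕ, 1 / (n : ℝ) ^ k ≤ 2 :=
  calc ∑' n : ℕ, 1 / (n : ℝ) ^ k
      ≤ ∑' n : ℕ, 1 / (n : ℝ) ^ 2 := by
        refine Summable.tsum_le_tsum (fun n ↦ ?_) (Real.summable_one_div_nat_pow.2 (by omega))
          (Real.summable_one_div_nat_pow.2 one_lt_two)
        rcases n.eq_zero_or_pos with rfl | hn
        · simp [zero_pow (by omega : k ≠ 0)]
        · exact one_div_le_one_div_of_le (by positivity)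
            (pow_le_pow_right₀ (by exact_mod_cast hn) hk)
    _ = π ^ 2 / 6 := hasSum_zeta_two.tsum_eq
    _ ≤ 2 := by nlinarith [pi_lt_d2, pi_pos]

lemma abs_bernoulli_two_mul_div_factorial {k : ℕ} (hk : k ≠ 0) :
    |(bernoulli (2 * k) : ℝ)| / (2 * k)!
      = 2 * (∑' n : ℕ, 1 / (n : ℝ) ^ (2 * k)) / (2 * π) ^ (2 * k) := by
  have hζ : 2 * (∑' n : ℕ, 1 / (n : ℝ) ^ (2 * k)) / (2 * π) ^ (2 * k)
      = (-1) ^ (k + 1) * (bernoulli (2 * k) : ℝ) / (2 * k)! := by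
    obtain ⟨j, rfl⟩ : ∃ j, k = j + 1 := ⟨k - 1, by omega⟩
    rw [(hasSum_zeta_nat hk).tsum_eq, show 2 * (j + 1) - 1 = 2 * j + 1 by omega]
    field_simp
    ring
  have hnonneg : 0 ≤ 2 * (∑' n : ℕ, 1 / (n : ℝ) ^ (2 * k)) / (2 * π) ^ (2 * k) := by
    have := pi_pos
    positivity
  rw [← abs_of_nonneg hnonneg, hζ, abs_div, abs_mul, abs_pow, abs_neg, abs_one, one_pow, one_mul,
    Nat.abs_cast]

lemma abs_bernoulli_div_factorial_le (n : ℕ) : |(bernoulli n : ℝ)| / n ! ≤ 4 / (2 * π) ^ n := by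
  have := pi_pos
  obtain ⟨k, rfl | rfl⟩ := Nat.even_or_odd' n
  · rcases eq_or_ne k 0 with rfl | hk
    · norm_num
    rw [abs_bernoulli_two_mul_div_factorial hk]
    gcongr
    linarith [tsum_one_div_nat_pow_le_two (k := 2 * k) (by omega)]
  · rcases eq_or_ne k 0 with rfl | hk
    · rw [div_le_div_iff₀ (by norm_num) (by positivity)]
      norm_num [bernoulli_one]
      linarith [pi_lt_four]
    rw [bernoulli_eq_zero_of_odd (odd_two_mul_add_one k) (by omega)]
    simp only [Rat.cast_zero, abs_zero, zero_div]
    positivity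

lemma summable_norm_bernoulli_div_factorial_mul_pow {u : ℝ} (hu : |u| < 2 * π) :
    Summable fun n ↦ ‖(bernoulli n : ℝ) / n ! * u ^ n‖ := by
  have := pi_pos
  have hgeom : Summable fun n ↦ 4 * (|u| / (2 * π)) ^ n :=
    (summable_geometric_of_lt_one (by positivity) ((div_lt_one (by positivity)).2 hu)).mul_left 4
  refine hgeom.of_nonneg_of_le (fun n ↦ norm_nonneg _) fun n ↦ ?_
  calc ‖(bernoulli n : ℝ) / n ! * u ^ n‖ = |(bernoulli n : ℝ)| / n ! * |u| ^ n := by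
        simp only [norm_mul, norm_div, norm_pow, Real.norm_eq_abs, Nat.abs_cast]
    _ ≤ 4 / (2 * π) ^ n * |u| ^ n := by
          gcongr ?_ * _
          exact abs_bernoulli_div_factorial_le n
    _ = 4 * (|u| / (2 * π)) ^ n := by rw [div_pow]; ring

lemma bernoulliFun_div_factorial_mul_pow_eq_sum_antidiagonal (n : ℕ) (x u : ℝ) :
    bernoulliFun n x / n ! * u ^ n
      = ∑ ij ∈ antidiagonal n,
          (bernoulli ij.1 : ℝ) / ij.1 ! * u ^ ij.1 * ((x * u) ^ ij.2 / ij.2 !) := by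
  rw [← Finset.Nat.sum_antidiagonal_swap]
  simp only [Prod.fst_swap, Prod.snd_swap]
  rw [Finset.Nat.sum_antidiagonal_eq_sum_range_succ
    (fun j i ↦ (bernoulli i : ℝ) / i ! * u ^ i * ((x * u) ^ j / j !)), bernoulliFun,
    Polynomial.bernoulli_def, Polynomial.map_sum, Polynomial.eval_finsetSum, Finset.sum_div,
    Finset.sum_mul]
  refine Finset.sum_congr rfl fun i hi ↦ ?_
  have hin : i ≤ n := Nat.lt_succ_iff.mp (Finset.mem_range.mp hi)
  rw [Polynomial.map_monomial, Polynomial.eval_monomial, eq_ratCast, Rat.cast_mul, Rat.cast_natCast,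
    Nat.cast_choose ℝ hin, mul_pow, ← pow_sub_mul_pow u hin]
  field_simp

lemma hasSum_bernoulliFun_div_factorial_mul_pow_tsum_mul_exp {u : ℝ} (hu : |u| < 2 * π) (x : ℝ) :
    HasSum (fun n ↦ bernoulliFun n x / n ! * u ^ n)
      ((∑' n, (bernoulli n : ℝ) / n ! * u ^ n) * exp (x * u)) := by
  have hB := summable_norm_bernoulli_div_factorial_mul_pow hu
  have hE : Summable fun n ↦ ‖(x * u) ^ n / (n ! : ℝ)‖ := by
    simpa only [norm_div, norm_pow, Real.norm_eq_abs, Nat.abs_cast]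
      using summable_pow_div_factorial |x * u|
  have hprod := summable_norm_sum_mul_antidiagonal_of_summable_norm hB hE
  rw [exp_eq_exp_ℝ, ← (NormedSpace.expSeries_div_hasSum_exp (x * u)).tsum_eq,
    tsum_mul_tsum_eq_tsum_sum_antidiagonal_of_summable_norm hB hE]
  simp only [← bernoulliFun_div_factorial_mul_pow_eq_sum_antidiagonal] at hprod ⊢
  exact hprod.of_norm.hasSum

lemma tsum_bernoulli_div_factorial_mul_pow {u : ℝ} (hu : u ≠ 0) (hu2 : |u| < 2 * π) :
    ∑' n, (bernoulli n : ℝ) / n ! * u ^ n = u / (exp u - 1) := by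
  set S := ∑' n, (bernoulli n : ℝ) / n ! * u ^ n
  have hB : HasSum (fun n ↦ (bernoulli n : ℝ) / n ! * u ^ n) S :=
    (summable_norm_bernoulli_div_factorial_mul_pow hu2).of_norm.hasSum
  have hS : HasSum (fun n ↦ bernoulliFun n 1 / n ! * u ^ n) (S + u) := by
    convert hB.add (hasSum_ite_eq 1 u) using 1
    ext n
    rw [bernoulliFun_eval_one, bernoulliFun_eval_zero]
    split_ifs with h
    · subst h
      norm_num
      ring
    · simp
  have hSe := (hasSum_bernoulliFun_div_factorial_mul_pow_tsum_mul_exp hu2 1).unique hS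
  rw [one_mul] at hSe
  have hexp : exp u - 1 ≠ 0 := sub_ne_zero.2 fun h ↦ hu (Real.exp_eq_one_iff u |>.1 h)
  rw [eq_div_iff hexp]
  linear_combination hSe

lemma exp_sub_one_eq_two_mul_exp_mul_sinh (u : ℝ) : exp u - 1 = 2 * exp (u / 2) * sinh (u / 2) := by
  have h : exp u = exp (u / 2) * exp (u / 2) := by rw [← exp_add, add_halves]
  rw [sinh_eq, exp_neg, h]
  field_simp

lemma hasSum_bernoulliFun_div_factorial_mul_pow {u : ℝ} (hu : u ≠ 0) (hu2 : |u| < 2 * π) (x : ℝ) :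
    HasSum (fun n ↦ bernoulliFun n x / n ! * u ^ n)
      (u * exp ((x - 1 / 2) * u) / (2 * sinh (u / 2))) := by
  convert hasSum_bernoulliFun_div_factorial_mul_pow_tsum_mul_exp hu2 x using 1
  rw [tsum_bernoulli_div_factorial_mul_pow hu hu2, exp_sub_one_eq_two_mul_exp_mul_sinh,
    show (x - 1 / 2) * u = x * u - u / 2 by ring, exp_sub]
  ring

lemma hasSum_comp_two_mul_of_hasSum_neg_one_pow_mul {K : Type*} [Field K] [TopologicalSpace K]
    [IsTopologicalRing K] [NeZero (2 : K)] {c : ℕ → K} {a b : K} (ha : HasSum c a)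
    (hb : HasSum (fun n ↦ (-1) ^ n * c n) b) : HasSum (fun k ↦ c (2 * k)) ((a + b) / 2) := by
  have hodd : ∀ n ∉ Set.range (2 * ·), (c n + (-1) ^ n * c n) / 2 = 0 := by
    intro n hn
    have : Odd n := Nat.not_even_iff_odd.1 fun ⟨k, hk⟩ ↦ hn ⟨k, show 2 * k = n by omega⟩
    rw [this.neg_one_pow]
    ring
  convert (Function.Injective.hasSum_iff (mul_right_injective₀ two_ne_zero) hodd).2
    ((ha.add hb).div_const 2) using 1
  ext k
  simp only [Function.comp_apply, pow_mul, neg_one_sq, one_pow, one_mul, add_self_div_two]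

/-- For `0 < |u| < 2π` and every real `x`,
`u cosh((x-1/2)u) / (2 sinh(u/2)) = ∑_{k ≥ 0} (B_{2k}(x)/(2k)!) u^{2k}`. -/
theorem cosh_div_sinh_eq_tsum_bernoulli (u : ℝ) (hu : u ≠ 0) (hu2 : |u| < 2 * π) (x : ℝ) :
    u * Real.cosh ((x - 1/2) * u) / (2 * Real.sinh (u / 2))
      = ∑' k : ℕ, bernoulliPoly (2 * k) x / (Nat.factorial (2 * k) : ℝ) * u ^ (2 * k) := by
  have hpos := hasSum_bernoulliFun_div_factorial_mul_pow hu hu2 x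
  have hneg : HasSum (fun n ↦ (-1) ^ n * (bernoulliFun n x / n ! * u ^ n))
      (-u * exp ((x - 1 / 2) * -u) / (2 * sinh (-u / 2))) := by
    convert hasSum_bernoulliFun_div_factorial_mul_pow (neg_ne_zero.2 hu) (by rwa [abs_neg]) x
      using 2
    rw [neg_pow]
    ring
  rw [bernoulliPoly_eq_bernoulliFun,
    (hasSum_comp_two_mul_of_hasSum_neg_one_pow_mul hpos hneg).tsum_eq, mul_neg, neg_div, sinh_neg,
    cosh_eq]
  ring
end

section
/- For every integer L ≥ 0 and every real u > 0: S_L(0,u) = 0, S_L(1/2,u) = 0, and S_L(x,u) > 0 for every x in the open interval (0,1/2). -/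
open Real

/-- For an integer `L ≥ -1`, `S_L(x,u) = (-1)^L (sinh((x-1/2)u)/(2 sinh(u/2))
    - ∑_{k=0}^{L} (B_{2k+1}(x)/(2k+1)!) u^{2k})`, the empty sum (for `L = -1`) being zero. -/
noncomputable def S (L : ℤ) (x u : ℝ) : ℝ :=
  (-1 : ℝ) ^ L * (Real.sinh ((x - 1/2) * u) / (2 * Real.sinh (u / 2))
    - ∑ k ∈ Finset.range (L + 1).toNat,
        bernoulliPoly (2 * k + 1) x / (Nat.factorial (2 * k + 1) : ℝ) * u ^ (2 * k))

/-! Write `g_n(x)` for the sinh quotient minus the first `n` odd Bernoulli terms, so that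
`S_L = (-1)^L g_{L+1}`. Since `(B_{m+1}/(m+1)!)' = B_m/m!`, differentiating twice in `x` gives
`g_{n+1}'' = u² g_n`. For `n ≥ 1`, `g_n` vanishes at `x = 1/2` (odd Bernoulli polynomials vanish
there) and at `x = 0` (the sinh quotient is `-1/2 = B_1(0)`, and `B_{2k+1}(0) = 0` for `k ≥ 1`).
Hence by induction `(-1)^{n+1} g_n > 0` on `(0, 1/2)`: for `n = 0` this is the sign of `sinh`,
and in the inductive step `(-1)^{n+2} g_{n+1}` is strictly concave with zero boundary values. -/

open Set Nat

theorem pos_of_hasDerivAt_of_deriv2_neg {f f' f'' : ℝ → ℝ} {a b x : ℝ}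
    (hf : ∀ y, HasDerivAt f (f' y) y) (hf' : ∀ y, HasDerivAt f' (f'' y) y)
    (hf'' : ∀ y ∈ Ioo a b, f'' y < 0) (ha : f a = 0) (hb : f b = 0) (hx : x ∈ Ioo a b) :
    0 < f x := by
  have hab : a < b := hx.1.trans hx.2
  have hconc : StrictConcaveOn ℝ (Icc a b) f := by
    refine strictConcaveOn_of_deriv2_neg (convex_Icc a b)
      (fun y _ => (hf y).continuousAt.continuousWithinAt) fun y hy => ?_
    have hderiv : deriv f = f' := funext fun y => (hf y).deriv
    rw [interior_Icc] at hy
    simpa [hderiv, (hf' y).deriv] using hf'' y hy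
  simpa [ha, hb] using hconc.lt_on_openSegment (left_mem_Icc.2 hab.le)
    (right_mem_Icc.2 hab.le) hab.ne (by rwa [openSegment_eq_Ioo hab])

lemma bernoulliPoly_zero_right (n : ℕ) : bernoulliPoly n 0 = bernoulli n := by
  simp [bernoulliPoly, Polynomial.eval_map, Polynomial.eval₂_at_zero,
    Polynomial.coeff_zero_eq_eval_zero]

lemma bernoulliPoly_one_sub (n : ℕ) (x : ℝ) :
    bernoulliPoly n (1 - x) = (-1) ^ n * bernoulliPoly n x := by
  simpa [bernoulliPoly, Polynomial.map_comp] using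
    congr_arg (fun p => (p.map (algebraMap ℚ ℝ)).eval x) (Polynomial.bernoulli_comp_one_sub_X n)

lemma bernoulliPoly_odd_half (k : ℕ) : bernoulliPoly (2 * k + 1) (1 / 2) = 0 := by
  have h := bernoulliPoly_one_sub (2 * k + 1) (1 / 2)
  norm_num [pow_succ, pow_mul] at h
  linarith

lemma hasDerivAt_bernoulliPoly_div_factorial (n : ℕ) (x : ℝ) :
    HasDerivAt (fun y => bernoulliPoly (n + 1) y / (n + 1)!) (bernoulliPoly n x / n !) x := by
  have h := (((Polynomial.bernoulli (n + 1)).map (algebraMap ℚ ℝ)).hasDerivAt x).div_const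
    ((n + 1)! : ℝ)
  rw [Polynomial.derivative_map, Polynomial.derivative_bernoulli_add_one] at h
  refine h.congr_deriv ?_
  rw [Nat.factorial_succ]
  simp [bernoulliPoly, field]

/-- `oddBernoulliTail` and `evenBernoulliTail` are the tails of the odd and even parts of the
Bernoulli generating function: `sinh((x-1/2)u)/(2 sinh(u/2)) = ∑ₖ B_{2k+1}(x) u^{2k}/(2k+1)!` and
`u cosh((x-1/2)u)/(2 sinh(u/2)) = ∑ₖ B_{2k}(x) u^{2k}/(2k)!`. -/
noncomputable def oddBernoulliTail (n : ℕ) (u x : ℝ) : ℝ :=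
  sinh ((x - 1/2) * u) / (2 * sinh (u / 2))
    - ∑ k ∈ Finset.range n, bernoulliPoly (2 * k + 1) x / (2 * k + 1)! * u ^ (2 * k)

noncomputable def evenBernoulliTail (n : ℕ) (u x : ℝ) : ℝ :=
  u * cosh ((x - 1/2) * u) / (2 * sinh (u / 2))
    - ∑ k ∈ Finset.range n, bernoulliPoly (2 * k) x / (2 * k)! * u ^ (2 * k)

lemma hasDerivAt_oddBernoulliTail (n : ℕ) (u x : ℝ) :
    HasDerivAt (oddBernoulliTail n u) (evenBernoulliTail n u x) x := by
  have hsinh : HasDerivAt (fun y => sinh ((y - 1/2) * u) / (2 * sinh (u / 2)))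
      (u * cosh ((x - 1/2) * u) / (2 * sinh (u / 2))) x :=
    ((((hasDerivAt_id x).sub_const (1/2)).mul_const u).sinh.div_const _).congr_deriv
      (by simp only [id_eq]; ring)
  exact hsinh.sub (HasDerivAt.fun_sum fun k _ =>
    (hasDerivAt_bernoulliPoly_div_factorial (2 * k) x).mul_const (u ^ (2 * k)))

lemma hasDerivAt_evenBernoulliTail (n : ℕ) (u x : ℝ) :
    HasDerivAt (evenBernoulliTail (n + 1) u) (u ^ 2 * oddBernoulliTail n u x) x := by
  have hcosh : HasDerivAt (fun y => u * cosh ((y - 1/2) * u) / (2 * sinh (u / 2)))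
      (u ^ 2 * (sinh ((x - 1/2) * u) / (2 * sinh (u / 2)))) x :=
    (((((hasDerivAt_id x).sub_const (1/2)).mul_const u).cosh.const_mul u).div_const _).congr_deriv
      (by simp only [id_eq]; ring)
  have hsum : HasDerivAt
      (fun y => ∑ k ∈ Finset.range n,
        bernoulliPoly (2 * (k + 1)) y / (2 * (k + 1))! * u ^ (2 * (k + 1)) + 1)
      (u ^ 2 * ∑ k ∈ Finset.range n, bernoulliPoly (2 * k + 1) x / (2 * k + 1)! * u ^ (2 * k))
      x := by
    rw [Finset.mul_sum]
    refine (HasDerivAt.fun_sum fun k _ => ?_).add_const 1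
    exact ((hasDerivAt_bernoulliPoly_div_factorial (2 * k + 1) x).mul_const _).congr_deriv
      (by ring)
  have hsplit : evenBernoulliTail (n + 1) u = fun y =>
      u * cosh ((y - 1/2) * u) / (2 * sinh (u / 2)) - (∑ k ∈ Finset.range n,
        bernoulliPoly (2 * (k + 1)) y / (2 * (k + 1))! * u ^ (2 * (k + 1)) + 1) := by
    ext y
    simp [evenBernoulliTail, Finset.sum_range_succ', bernoulliPoly]
  rw [hsplit]
  exact (hcosh.sub hsum).congr_deriv (by rw [oddBernoulliTail]; ring)

lemma oddBernoulliTail_half (n : ℕ) (u : ℝ) : oddBernoulliTail n u (1 / 2) = 0 := by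
  rw [oddBernoulliTail,
    Finset.sum_eq_zero fun k _ => by rw [bernoulliPoly_odd_half, zero_div, zero_mul]]
  norm_num

lemma oddBernoulliTail_zero {n : ℕ} (hn : n ≠ 0) {u : ℝ} (hu : u ≠ 0) :
    oddBernoulliTail n u 0 = 0 := by
  have hsinh : sinh ((0 - 1/2) * u) / (2 * sinh (u / 2)) = -1 / 2 := by
    have : sinh (u / 2) ≠ 0 := by simpa using hu
    rw [show (0 - 1/2) * u = -(u / 2) by ring, sinh_neg]
    field_simp
  have hsum : ∑ k ∈ Finset.range n, bernoulliPoly (2 * k + 1) 0 / (2 * k + 1)! * u ^ (2 * k)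
      = -1 / 2 := by
    rw [Finset.sum_eq_single_of_mem 0 (Finset.mem_range.2 (Nat.pos_of_ne_zero hn))]
    · norm_num [bernoulliPoly_zero_right, bernoulli_one]
    · intro k _ hk
      rw [bernoulliPoly_zero_right, bernoulli_eq_zero_of_odd (odd_two_mul_add_one k) (by omega)]
      simp
  rw [oddBernoulliTail, hsinh, hsum, sub_self]

lemma neg_one_pow_mul_oddBernoulliTail_pos (n : ℕ) {u : ℝ} (hu : 0 < u) {x : ℝ}
    (hx : x ∈ Ioo 0 (1 / 2)) : 0 < (-1) ^ (n + 1) * oddBernoulliTail n u x := by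
  induction n generalizing x with
  | zero =>
    have hnum : sinh ((x - 1/2) * u) < 0 :=
      sinh_neg_iff.2 (mul_neg_of_neg_of_pos (by linarith [hx.2]) hu)
    have hden : 0 < 2 * sinh (u / 2) := by simpa using half_pos hu
    simpa [oddBernoulliTail] using div_neg_of_neg_of_pos hnum hden
  | succ n ih =>
    refine pos_of_hasDerivAt_of_deriv2_neg
      (f := fun y => (-1) ^ (n + 1 + 1) * oddBernoulliTail (n + 1) u y)
      (f' := fun y => (-1) ^ (n + 1 + 1) * evenBernoulliTail (n + 1) u y)
      (f'' := fun y => -(u ^ 2 * ((-1) ^ (n + 1) * oddBernoulliTail n u y)))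
      (fun y => (hasDerivAt_oddBernoulliTail _ u y).const_mul _)
      (fun y => ((hasDerivAt_evenBernoulliTail n u y).const_mul _).congr_deriv (by ring))
      (fun y hy => neg_neg_of_pos (mul_pos (pow_pos hu 2) (ih hy)))
      ?_ ?_ hx
    · rw [oddBernoulliTail_zero n.succ_ne_zero hu.ne', mul_zero]
    · rw [oddBernoulliTail_half, mul_zero]

/-- For every integer `L ≥ 0` and every `u > 0`: `S_L(0,u) = 0`,
`S_L(1/2,u) = 0`, and `S_L(x,u) > 0` for every `x ∈ (0,1/2)`. -/
theorem S_nonneg_props (L : ℤ) (hL : 0 ≤ L) (u : ℝ) (hu : 0 < u) :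
    S L 0 u = 0 ∧ S L (1/2) u = 0 ∧
      ∀ x ∈ Set.Ioo (0 : ℝ) (1/2), 0 < S L x u := by
  lift L to ℕ using hL
  have hS : ∀ x, S L x u = (-1) ^ L * oddBernoulliTail (L + 1) u x := fun x => by
    rw [S, zpow_natCast, show ((L : ℤ) + 1).toNat = L + 1 by omega]
    rfl
  refine ⟨?_, ?_, fun x hx => ?_⟩
  · rw [hS, oddBernoulliTail_zero L.succ_ne_zero hu.ne', mul_zero]
  · rw [hS, oddBernoulliTail_half, mul_zero]
  · simpa [hS, pow_succ] using neg_one_pow_mul_oddBernoulliTail_pos (L + 1) hu hx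
end

section
/- For every real z > 0, the negative logarithmic derivative of the gamma function satisfies −(d/dz) log Γ(z) = ∫_0^∞ ( e^{−uz}/(1 − e^{−u}) − e^{−u}/u ) du. -/
/-!
Write `ψ = (log Γ)'` and `I(z)` for the integral. Both sides obey the same recurrence:
`ψ(z + 1) = ψ(z) + 1/z` from `Γ(z + 1) = z Γ(z)`, and `I(z) - I(z + 1) = ∫₀^∞ e^{-uz} du = 1/z`
because the factor `1 - e^{-u}` cancels. So `ψ + I` is `1`-periodic and it suffices that it tends
to `0` at infinity. Convexity of `log Γ` squeezes `ψ(x)` between `log (x - 1)` and `log x`. Writing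
the integrand as `e^{-ux} K(u) + (e^{-ux} - e^{-u})/u` with `K(u) = 1/(1 - e^{-u}) - 1/u ∈ [0, 1]`,
the second part integrates to `-log x` by Frullani's theorem and the first lies in `[0, 1/x]`.
-/

open Real MeasureTheory Set Filter Topology

lemma abs_exp_neg_sub_exp_neg_le (a b : ℝ) :
    |exp (-a) - exp (-b)| ≤ |a - b| * exp (-min a b) := by
  wlog hab : a ≤ b generalizing a b
  · rw [abs_sub_comm, abs_sub_comm a, min_comm]
    exact this b a (le_of_not_ge hab)
  have hexp : exp (-b) = exp (-a) * exp (a - b) := by rw [← exp_add]; ring_nf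
  rw [min_eq_left hab, abs_of_nonneg (sub_nonneg.2 (exp_le_exp.2 (neg_le_neg hab))),
    abs_of_nonpos (by linarith), hexp]
  nlinarith [add_one_le_exp (a - b), exp_pos (-a)]

lemma integrableOn_exp_neg_mul_Ioi {z : ℝ} (hz : 0 < z) :
    IntegrableOn (fun u => exp (-u * z)) (Ioi 0) := by
  simp_rw [neg_mul, ← mul_neg, mul_comm _ (-z)]
  exact integrableOn_exp_mul_Ioi (neg_neg_of_pos hz) 0

lemma integral_exp_neg_mul_Ioi {z : ℝ} (hz : 0 < z) : ∫ u in Ioi 0, exp (-u * z) = z⁻¹ := by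
  simpa [neg_mul, mul_comm] using integral_exp_mul_Ioi (neg_neg_of_pos hz) 0

lemma integrableOn_frullani_exp {z : ℝ} (hz : 0 < z) :
    IntegrableOn (fun u => u⁻¹ * (exp (-u * z) - exp (-u))) (Ioi 0) := by
  refine ((exp_neg_integrableOn_Ioi 0 (lt_min hz one_pos)).const_mul |z - 1|).mono'
    (by fun_prop) ?_
  filter_upwards [ae_restrict_mem measurableSet_Ioi] with u (hu : 0 < u)
  have hmin : min (u * z) u = u * min z 1 := by rw [mul_min_of_nonneg _ _ hu.le, mul_one]
  have hdiff : |u * z - u| = u * |z - 1| := by rw [← mul_sub_one, abs_mul, abs_of_pos hu]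
  calc ‖u⁻¹ * (exp (-u * z) - exp (-u))‖
      = u⁻¹ * |exp (-(u * z)) - exp (-u)| := by
        rw [norm_mul, norm_inv, norm_of_nonneg hu.le, neg_mul, norm_eq_abs]
    _ ≤ u⁻¹ * (|u * z - u| * exp (-min (u * z) u)) := by
        gcongr; exact abs_exp_neg_sub_exp_neg_le _ _
    _ = |z - 1| * exp (-min z 1 * u) := by
        rw [hmin, hdiff]; field_simp

lemma integral_frullani_exp {z : ℝ} (hz : 0 < z) :
    ∫ u in Ioi 0, u⁻¹ * (exp (-u * z) - exp (-u)) = -log z := by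
  have hcont : Continuous fun x : ℝ => exp (-x) := by fun_prop
  have hL : Tendsto (fun x : ℝ => exp (-x)) (𝓝[>] 0) (𝓝 1) := by
    simpa using hcont.tendsto 0 |>.mono_left nhdsWithin_le_nhds
  have := Frullani.integral_Ioi_eq (f := fun x => exp (-x)) (a := z) (b := 1)
    (hcont.locallyIntegrable.locallyIntegrableOn _) hz one_pos hL
    tendsto_exp_neg_atTop_nhds_zero (by simpa [mul_comm] using integrableOn_frullani_exp hz)
  simpa [mul_comm] using this

noncomputable def gaussKernel (u : ℝ) : ℝ := (1 - exp (-u))⁻¹ - u⁻¹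

lemma gaussKernel_nonneg {u : ℝ} (hu : 0 < u) : 0 ≤ gaussKernel u :=
  sub_nonneg.2 <| inv_anti₀ (sub_pos.2 (exp_lt_one_iff.2 (neg_neg_of_pos hu)))
    (by linarith [add_one_le_exp (-u)])

lemma gaussKernel_le_one {u : ℝ} (hu : 0 < u) : gaussKernel u ≤ 1 := by
  have hexp : 0 < exp u - 1 := sub_pos.2 (one_lt_exp_iff.2 hu)
  have heq : gaussKernel u = (exp u - 1)⁻¹ - u⁻¹ + 1 := by
    have : 1 - exp (-u) = (exp u - 1) / exp u := by
      rw [exp_neg]; field_simp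
    rw [gaussKernel, this, inv_div]
    field_simp
    ring
  have : (exp u - 1)⁻¹ ≤ u⁻¹ := inv_anti₀ hu (by linarith [add_one_le_exp u])
  linarith

lemma integrableOn_exp_neg_mul_mul_gaussKernel {z : ℝ} (hz : 0 < z) :
    IntegrableOn (fun u => exp (-u * z) * gaussKernel u) (Ioi 0) := by
  refine (integrableOn_exp_neg_mul_Ioi hz).mono' (by unfold gaussKernel; fun_prop) ?_
  filter_upwards [ae_restrict_mem measurableSet_Ioi] with u (hu : 0 < u)
  rw [norm_mul, norm_of_nonneg (exp_pos _).le, norm_of_nonneg (gaussKernel_nonneg hu)]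
  exact mul_le_of_le_one_right (exp_pos _).le (gaussKernel_le_one hu)

noncomputable def gaussIntegrand (z u : ℝ) : ℝ := exp (-u * z) / (1 - exp (-u)) - exp (-u) / u

lemma gaussIntegrand_eq (z : ℝ) :
    gaussIntegrand z =
      fun u => exp (-u * z) * gaussKernel u + u⁻¹ * (exp (-u * z) - exp (-u)) := by
  ext u
  rw [gaussIntegrand, gaussKernel]
  ring

lemma integrableOn_gaussIntegrand {z : ℝ} (hz : 0 < z) :
    IntegrableOn (gaussIntegrand z) (Ioi 0) := by
  rw [gaussIntegrand_eq]
  exact (integrableOn_exp_neg_mul_mul_gaussKernel hz).add (integrableOn_frullani_exp hz)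

noncomputable def gaussIntegral (z : ℝ) : ℝ := ∫ u in Ioi 0, gaussIntegrand z u

lemma gaussIntegral_sub_gaussIntegral_add_one {z : ℝ} (hz : 0 < z) :
    gaussIntegral z - gaussIntegral (z + 1) = z⁻¹ := by
  rw [gaussIntegral, gaussIntegral, ← integral_sub (integrableOn_gaussIntegrand hz)
    (integrableOn_gaussIntegrand (by positivity)), ← integral_exp_neg_mul_Ioi hz]
  refine setIntegral_congr_fun measurableSet_Ioi fun u (hu : 0 < u) => ?_
  have hexp : exp (-u * (z + 1)) = exp (-u * z) * exp (-u) := by rw [← exp_add]; ring_nf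
  have hne : 1 - exp (-u) ≠ 0 := (sub_pos.2 (exp_lt_one_iff.2 (neg_neg_of_pos hu))).ne'
  simp only [gaussIntegrand, hexp]
  field_simp
  ring

lemma gaussIntegral_add_log {z : ℝ} (hz : 0 < z) :
    gaussIntegral z + log z = ∫ u in Ioi 0, exp (-u * z) * gaussKernel u := by
  rw [gaussIntegral, gaussIntegrand_eq, integral_add (integrableOn_exp_neg_mul_mul_gaussKernel hz)
    (integrableOn_frullani_exp hz), integral_frullani_exp hz, neg_add_cancel_right]

lemma tendsto_gaussIntegral_add_log :
    Tendsto (fun x => gaussIntegral x + log x) atTop (𝓝 0) := by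
  refine tendsto_of_tendsto_of_tendsto_of_le_of_le' tendsto_const_nhds tendsto_inv_atTop_zero
    ?_ ?_ <;> filter_upwards [eventually_gt_atTop 0] with x hx <;> rw [gaussIntegral_add_log hx]
  · exact setIntegral_nonneg measurableSet_Ioi fun u hu =>
      mul_nonneg (exp_pos _).le (gaussKernel_nonneg hu)
  · rw [← integral_exp_neg_mul_Ioi hx]
    refine setIntegral_mono_on (integrableOn_exp_neg_mul_mul_gaussKernel hx)
      (integrableOn_exp_neg_mul_Ioi hx) measurableSet_Ioi fun u hu => ?_
    exact mul_le_of_le_one_right (exp_pos _).le (gaussKernel_le_one hu)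

lemma differentiableAt_log_Gamma {x : ℝ} (hx : 0 < x) : DifferentiableAt ℝ (log ∘ Gamma) x :=
  (differentiableAt_Gamma fun m => ((neg_nonpos.mpr m.cast_nonneg).trans_lt hx).ne').log
    (Gamma_pos_of_pos hx).ne'

lemma log_Gamma_add_one {x : ℝ} (hx : 0 < x) : log (Gamma (x + 1)) = log (Gamma x) + log x := by
  rw [Gamma_add_one hx.ne', log_mul hx.ne' (Gamma_pos_of_pos hx).ne', add_comm]

lemma deriv_log_Gamma_add_one {x : ℝ} (hx : 0 < x) :
    deriv (log ∘ Gamma) (x + 1) = deriv (log ∘ Gamma) x + x⁻¹ := by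
  rw [← deriv_comp_add_const, ← deriv_log,
    ← deriv_add (differentiableAt_log_Gamma hx) (differentiableAt_log hx.ne')]
  apply EventuallyEq.deriv_eq
  filter_upwards [eventually_gt_nhds hx] with y hy using log_Gamma_add_one hy

lemma slope_log_Gamma_add_one {x : ℝ} (hx : 0 < x) : slope (log ∘ Gamma) x (x + 1) = log x := by
  rw [slope_def_field, Function.comp_apply, Function.comp_apply, log_Gamma_add_one hx]
  ring

lemma deriv_log_Gamma_le_log {x : ℝ} (hx : 0 < x) : deriv (log ∘ Gamma) x ≤ log x :=
  slope_log_Gamma_add_one hx ▸ convexOn_log_Gamma.deriv_le_slope hx (by positivity : 0 < x + 1)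
    (lt_add_one x) (differentiableAt_log_Gamma hx)

lemma log_sub_one_le_deriv_log_Gamma {x : ℝ} (hx : 1 < x) :
    log (x - 1) ≤ deriv (log ∘ Gamma) x := by
  have hslope := slope_log_Gamma_add_one (sub_pos.2 hx)
  rw [sub_add_cancel] at hslope
  exact hslope ▸ convexOn_log_Gamma.slope_le_deriv (sub_pos.2 hx) (by positivity : 0 < x)
    (sub_one_lt x) (differentiableAt_log_Gamma (by positivity))

lemma tendsto_deriv_log_Gamma_sub_log :
    Tendsto (fun x => deriv (log ∘ Gamma) x - log x) atTop (𝓝 0) := by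
  refine tendsto_of_tendsto_of_tendsto_of_le_of_le' (tendsto_log_comp_add_sub_log (-1))
    tendsto_const_nhds ?_ ?_
  · filter_upwards [eventually_gt_atTop 1] with x hx
    rw [← sub_eq_add_neg]
    linarith [log_sub_one_le_deriv_log_Gamma hx]
  · filter_upwards [eventually_gt_atTop 0] with x hx
    linarith [deriv_log_Gamma_le_log hx]

lemma eq_of_add_one_eq_of_tendsto {X : Type*} [TopologicalSpace X] [T2Space X] {f : ℝ → X}
    {z : ℝ} {l : X} (hf : ∀ x, z ≤ x → f (x + 1) = f x) (hlim : Tendsto f atTop (𝓝 l)) :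
    f z = l := by
  have hper : ∀ n : ℕ, f (z + n) = f z := by
    intro n
    induction n with
    | zero => simp
    | succ n ih =>
      rw [Nat.cast_succ, ← add_assoc, hf _ (le_add_of_nonneg_right n.cast_nonneg), ih]
  have hseq : Tendsto (fun n : ℕ => f (z + n)) atTop (𝓝 l) :=
    hlim.comp (tendsto_atTop_add_const_left _ z tendsto_natCast_atTop_atTop)
  exact tendsto_nhds_unique (tendsto_const_nhds.congr fun n => (hper n).symm) hseq

/-- For every real `z > 0`,
`-(d/dz) log Γ(z) = ∫_0^∞ (e^{-uz}/(1 - e^{-u}) - e^{-u}/u) du`. -/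
theorem neg_deriv_log_Gamma_eq_integral (z : ℝ) (hz : 0 < z) :
    -deriv (fun w => Real.log (Real.Gamma w)) z
      = ∫ u in Set.Ioi (0 : ℝ),
          (Real.exp (-u * z) / (1 - Real.exp (-u)) - Real.exp (-u) / u) := by
  have hlim : Tendsto (fun x => deriv (log ∘ Gamma) x + gaussIntegral x) atTop (𝓝 0) := by
    simpa using tendsto_deriv_log_Gamma_sub_log.add tendsto_gaussIntegral_add_log
  have hsum := eq_of_add_one_eq_of_tendsto (z := z) (fun x hx => by
    have hx' : 0 < x := hz.trans_le hx
    linarith [deriv_log_Gamma_add_one hx', gaussIntegral_sub_gaussIntegral_add_one hx']) hlim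
  change -deriv (log ∘ Gamma) z = gaussIntegral z
  linarith
end
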